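/- arXiv:2412.04417 — 4 statements merged into one kernel-verified Lean document; each statement's English description precedes it below -/
import Mathlib

section
/- Let C ⊆ ℝ^n_{≥0} be a closed convex set that does not contain the origin and that absorbs ℝ^n_{≥0}, i.e., C + ℝ^n_{≥0} ⊆ C. Then (C^o)^o = C. -/
noncomputable section

/-- Usual dot product on `ℝⁿ`. -/
def dotProd {n : ℕ} (a b : Fin n → ℝ) : ℝ := ∑ i, a i * b i

/-- The polar set `D° = {a : ⟨a,b⟩ ≥ 1 for all b ∈ D}`. -/
def polarSet {n : ℕ} (D : Set (Fin n → ℝ)) : Set (Fin n → ℝ) :=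
  {a | ∀ b ∈ D, 1 ≤ dotProd a b}

lemma dotProd_comm {n : ℕ} (a b : Fin n → ℝ) : dotProd a b = dotProd b a := by
  simp [dotProd, mul_comm]

lemma dotProd_add_left {n : ℕ} (a b c : Fin n → ℝ) :
    dotProd (a + b) c = dotProd a c + dotProd b c := by
  simp [dotProd, add_mul, Finset.sum_add_distrib]

lemma dotProd_smul_left {n : ℕ} (r : ℝ) (a b : Fin n → ℝ) :
    dotProd (r • a) b = r * dotProd a b := by
  simp [dotProd, Finset.mul_sum, mul_assoc]

lemma clm_repr {n : ℕ} (f : (Fin n → ℝ) →L[ℝ] ℝ) (x : Fin n → ℝ) :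
    f x = dotProd (fun i => f (Pi.single i 1)) x := by
  have h := LinearMap.pi_apply_eq_sum_univ (f : (Fin n → ℝ) →ₗ[ℝ] ℝ) x
  simp only [ContinuousLinearMap.coe_coe] at h
  rw [h, dotProd]
  refine Finset.sum_congr rfl fun i _ => ?_
  rw [smul_eq_mul, mul_comm]
  congr 1
  congr 1
  funext j
  simp [Pi.single_apply, eq_comm]

lemma coeff_nonneg {n : ℕ} {C : Set (Fin n → ℝ)}
    (hCabs : ∀ c ∈ C, ∀ y : Fin n → ℝ, (∀ i, 0 ≤ y i) → c + y ∈ C)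
    {c₀ : Fin n → ℝ} (hc₀ : c₀ ∈ C) (f : (Fin n → ℝ) →L[ℝ] ℝ) (u : ℝ)
    (hfC : ∀ b ∈ C, u < f b) (i : Fin n) : 0 ≤ f (Pi.single i 1) := by
  by_contra h
  push_neg at h
  set g : ℝ := f (Pi.single i 1) with hg
  set t : ℝ := (u - f c₀ - 1) / g with hT
  have hc₀u : u < f c₀ := hfC c₀ hc₀
  have ht : 0 ≤ t := by
    rw [hT, div_nonneg_iff]
    right
    constructor <;> linarith
  have hy : ∀ j, 0 ≤ (t • (Pi.single i 1 : Fin n → ℝ)) j := by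
    intro j
    simp only [Pi.smul_apply, smul_eq_mul, Pi.single_apply]
    split <;> simp [ht]
  have hm : c₀ + t • (Pi.single i 1 : Fin n → ℝ) ∈ C := hCabs _ hc₀ _ hy
  have h2 := hfC _ hm
  rw [map_add, map_smul, smul_eq_mul, ← hg] at h2
  rw [hT, div_mul_cancel₀ _ (ne_of_lt h)] at h2
  linarith

/-- Lemma: bipolar. Let `C ⊆ ℝⁿ_{≥0}` be a closed convex set not containing
the origin which absorbs `ℝⁿ_{≥0}` (i.e. `C + ℝⁿ_{≥0} ⊆ C`). Then `(C°)° = C`. -/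
theorem bipolar {n : ℕ} (C : Set (Fin n → ℝ))
    (hCnonneg : C ⊆ {x | ∀ i, 0 ≤ x i})
    (hCclosed : IsClosed C) (hCconvex : Convex ℝ C)
    (hC0 : (0 : Fin n → ℝ) ∉ C)
    (hCabs : ∀ c ∈ C, ∀ y : Fin n → ℝ, (∀ i, 0 ≤ y i) → c + y ∈ C) :
    polarSet (polarSet C) = C := by
  ext x
  constructor
  · -- hard direction
    intro hx
    by_contra hxC
    rcases Set.eq_empty_or_nonempty C with hE | ⟨c₀, hc₀⟩
    · -- C empty : polarSet C = univ, and 0 ∈ polarSet C gives contradiction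
      have h0 : (0 : Fin n → ℝ) ∈ polarSet C := by
        intro b hb
        rw [hE] at hb
        exact absurd hb (Set.notMem_empty b)
      have := hx 0 h0
      simp [dotProd] at this
      linarith
    · -- separation of 0 from C
      obtain ⟨f₀, u₀, h0lt, hf₀C⟩ :=
        geometric_hahn_banach_point_closed hCconvex hCclosed hC0
      rw [map_zero] at h0lt
      -- separation of x from C
      obtain ⟨f, u, hfx, hfC⟩ :=
        geometric_hahn_banach_point_closed hCconvex hCclosed hxC
      set g : Fin n → ℝ := fun i => f (Pi.single i 1) with hgdef
      set g₀ : Fin n → ℝ := fun i => f₀ (Pi.single i 1) with hg₀def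
      have hgnn : ∀ i, 0 ≤ g i := fun i => coeff_nonneg hCabs hc₀ f u hfC i
      have hg₀nn : ∀ i, 0 ≤ g₀ i := fun i => coeff_nonneg hCabs hc₀ f₀ u₀ hf₀C i
      have hfrep : ∀ y, f y = dotProd g y := fun y => clm_repr f y
      have hf₀rep : ∀ y, f₀ y = dotProd g₀ y := fun y => clm_repr f₀ y
      -- a₀ = g₀ / u₀ is in the polar of C
      have ha₀ : (u₀⁻¹ • g₀) ∈ polarSet C := by
        intro b hb
        rw [dotProd_smul_left, ← hf₀rep]
        have hub := hf₀C b hb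
        rw [show (1:ℝ) = u₀⁻¹ * u₀ by rw [inv_mul_cancel₀ (ne_of_gt h0lt)]]
        exact mul_le_mul_of_nonneg_left hub.le (inv_nonneg.2 h0lt.le)
      rcases lt_or_ge (f x) 0 with hneg | hpos
      · -- f x < 0 : push with large multiples of g
        set s : ℝ := dotProd x (u₀⁻¹ • g₀) with hs
        set t : ℝ := max s 0 / (-f x) with hTdef
        have hfx0 : (0:ℝ) < -f x := by linarith
        have ht0 : 0 ≤ t := div_nonneg (le_max_right s 0) hfx0.le
        have h2 : t * (-f x) = max s 0 := div_mul_cancel₀ _ (ne_of_gt hfx0)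
        have h3 : t * f x = -(max s 0) := by linear_combination -h2
        have haP : (u₀⁻¹ • g₀ + t • g) ∈ polarSet C := by
          intro b hb
          rw [dotProd_add_left, dotProd_smul_left, dotProd_smul_left]
          have h1 : 1 ≤ dotProd (u₀⁻¹ • g₀) b := ha₀ b hb
          rw [dotProd_smul_left] at h1
          have h4 : 0 ≤ dotProd g b := by
            apply Finset.sum_nonneg
            intro i _
            exact mul_nonneg (hgnn i) (hCnonneg hb i)
          nlinarith [mul_nonneg ht0 h4]
        have := hx _ haP
        rw [dotProd_comm, dotProd_add_left, dotProd_smul_left, dotProd_smul_left] at this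
        have hs' : s = u₀⁻¹ * dotProd g₀ x := by
          rw [hs, dotProd_comm, dotProd_smul_left]
        have h7 : t * dotProd g x = -(max s 0) := by rw [← hfrep]; exact h3
        have h5 : s ≤ max s 0 := le_max_left s 0
        linarith
      · -- 0 ≤ f x : then u > 0 and g / u is in the polar
        have hu : 0 < u := lt_of_le_of_lt hpos hfx
        have haP : (u⁻¹ • g) ∈ polarSet C := by
          intro b hb
          rw [dotProd_smul_left, ← hfrep]
          have hub := hfC b hb
          rw [show (1:ℝ) = u⁻¹ * u by rw [inv_mul_cancel₀ (ne_of_gt hu)]]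
          exact mul_le_mul_of_nonneg_left hub.le (inv_nonneg.2 hu.le)
        have := hx _ haP
        rw [dotProd_comm, dotProd_smul_left, ← hfrep] at this
        have h6 : u⁻¹ * f x < u⁻¹ * u :=
          mul_lt_mul_of_pos_left hfx (inv_pos.2 hu)
        rw [inv_mul_cancel₀ (ne_of_gt hu)] at h6
        linarith
  · -- easy direction
    intro hx a ha
    rw [dotProd_comm]
    exact ha x hx

end
end

section
/- Let I be a nonzero proper squarefree monomial ideal in R = k[x_1,...,x_n] over a field k. Then ρ̂(I^(•), overline(I^•)) = sup{λ > 0 : λ·SP(I) ⊄ NP(I)}. -/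
open Filter Pointwise MvPolynomial

noncomputable section

/-- A graded family of ideals: `a p * a q ⊆ a (p+q)` for all `p, q ≥ 1`. -/
def IsGradedFamily {R : Type*} [CommSemiring R] (a : ℕ → Ideal R) : Prop :=
  ∀ p q : ℕ, 1 ≤ p → 1 ≤ q → a p * a q ≤ a (p + q)

/-- The integral closure of an ideal `J`: elements `x` satisfying an equation
`x^m + c_1 x^{m-1} + ⋯ + c_m = 0` with `c_i ∈ J^i`. -/
def idealIntegralClosure {R : Type*} [CommRing R] (J : Ideal R) : Set R :=
  {x | ∃ m : ℕ, 0 < m ∧ ∃ c : ℕ → R,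
    (∀ i ∈ Finset.Icc 1 m, c i ∈ J ^ i) ∧
    x ^ m + ∑ i ∈ Finset.Icc 1 m, c i * x ^ (m - i) = 0}

/-- The asymptotic resurgence
`ρ̂(a_•, B_•) = sup{s/r : s,r ≥ 1, a_{st} ⊄ B_{rt} for all t ≫ 0}` (in `EReal`, so that
the supremum of the empty set is `⊥ = -∞`); the second family is a family of subsets. -/
def asymptoticResurgence {R : Type*} [CommSemiring R] (a : ℕ → Ideal R) (B : ℕ → Set R) :
    EReal :=
  sSup {x : EReal | ∃ s r : ℕ, 1 ≤ s ∧ 1 ≤ r ∧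
    (∀ᶠ t in atTop, ¬ ((a (s * t) : Set R) ⊆ B (r * t))) ∧
    x = (((s : ℝ) / (r : ℝ) : ℝ) : EReal)}

/-- `sup{λ > 0 : λ·A ⊄ B}` as an extended real (`sup ∅ = -∞`). -/
def supScaleNotSubset {n : ℕ} (A B : Set (Fin n → ℝ)) : EReal :=
  sSup {x : EReal | ∃ l : ℝ, 0 < l ∧ ¬ (l • A ⊆ B) ∧ x = ((l : ℝ) : EReal)}

variable {𝕜 : Type*} [Field 𝕜] {n : ℕ}

/-- A monomial ideal: an ideal generated by monomials. -/
def IsMonomialIdeal (I : Ideal (MvPolynomial (Fin n) 𝕜)) : Prop :=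
  ∃ S : Set (Fin n →₀ ℕ), I = Ideal.span ((fun d => monomial d (1 : 𝕜)) '' S)

/-- The Newton polyhedron `NP(I) = conv{d ∈ ℤⁿ_{≥0} : x^d ∈ I}`. -/
def newtonPolyhedron (I : Ideal (MvPolynomial (Fin n) 𝕜)) : Set (Fin n → ℝ) :=
  convexHull ℝ {x | ∃ d : Fin n →₀ ℕ, monomial d (1 : 𝕜) ∈ I ∧ x = fun i => (d i : ℝ)}

/-- The Newton–Okounkov body `Δ(a_•) = closure (⋃_{k ≥ 1} (1/k)·NP(a_k))`. -/
def noBody (a : ℕ → Ideal (MvPolynomial (Fin n) 𝕜)) : Set (Fin n → ℝ) :=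
  closure (⋃ k : ℕ, ⋃ (_ : 1 ≤ k), (k : ℝ)⁻¹ • newtonPolyhedron (a k))

/-- A squarefree monomial ideal: an ideal generated by squarefree monomials. -/
def IsSqfreeMonomialIdeal (I : Ideal (MvPolynomial (Fin n) 𝕜)) : Prop :=
  ∃ S : Set (Finset (Fin n)), I = Ideal.span ((fun s => ∏ i ∈ s, X i) '' S)

open Classical in
/-- The symbolic polyhedron
`SP(I) = ⋂_{p ∈ Ass(R/I)} {a ∈ ℝⁿ_{≥0} : Σ_{x_i ∈ p} a_i ≥ 1}`. -/
def symbolicPolyhedron (I : Ideal (MvPolynomial (Fin n) 𝕜)) : Set (Fin n → ℝ) :=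
  ⋂ p ∈ associatedPrimes (MvPolynomial (Fin n) 𝕜) (MvPolynomial (Fin n) 𝕜 ⧸ I),
    {a | (∀ i, 0 ≤ a i) ∧ 1 ≤ ∑ i : Fin n, if X i ∈ p then a i else 0}

open Classical in
/-- The Alexander dual `I^∨ = (∏_{x_i ∈ p} x_i : p ∈ Ass(R/I))`. -/
def alexanderDual (I : Ideal (MvPolynomial (Fin n) 𝕜)) : Ideal (MvPolynomial (Fin n) 𝕜) :=
  Ideal.span {f | ∃ p ∈ associatedPrimes (MvPolynomial (Fin n) 𝕜) (MvPolynomial (Fin n) 𝕜 ⧸ I),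
    f = ∏ i ∈ Finset.univ.filter (fun i => X i ∈ p), X i}

/-- The `m`-th symbolic power `I^{(m)} = ⋂_{p ∈ Ass(R/I)} p^m`. -/
def symbolicPower (I : Ideal (MvPolynomial (Fin n) 𝕜)) (m : ℕ) : Ideal (MvPolynomial (Fin n) 𝕜) :=
  ⨅ p ∈ associatedPrimes (MvPolynomial (Fin n) 𝕜) (MvPolynomial (Fin n) 𝕜 ⧸ I), p ^ m

/-!
Both sides are compared monomial by monomial. The associated primes of a squarefree monomial
ideal are generated by variables, so `x^a ∈ I^(m)` iff `a / m ∈ SP(I)`, while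
`x^a ∈ overline(I^N)` forces `a / N ∈ NP(I)`. Conversely, by Carathéodory a point `w ∈ NP(I)`
is a convex combination of at most `n + 1` exponents of monomials of `I`; rounding the weights
down gives `x^c ∈ I^m` as soon as `(m + n + 1) w ≤ c`.

If `u · SP(I) ⊆ NP(I)` with `u r < s`, this rounding applies to every monomial of `f^K` for
`f ∈ I^(st)` and `K` large, so `f^K ∈ I^(rtK)` and `f ∈ overline(I^(rt))`. If instead
`l x ∉ NP(I)` for some `x ∈ SP(I)`, then for `s / r < l` and `t` large the monomial
`x^⌈st x⌉` lies in `I^(st)` but not in `overline(I^(rt))`, because `⌈st x⌉ / (rt) ≤ l x`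
and `NP(I)` is stable under adding the positive orthant.
-/

theorem EReal.coe_le_sSup_of_forall_div_lt_mem {T : Set EReal} {c : ℝ} (hc : 0 < c)
    (h : ∀ s r : ℕ, 0 < s → 0 < r → (s / r : ℝ) < c → ((s / r : ℝ) : EReal) ∈ T) :
    (c : EReal) ≤ sSup T := by
  refine le_of_forall_lt_imp_le_of_dense fun a ha => ?_
  obtain ⟨q, haq, hqc⟩ := EReal.lt_iff_exists_rat_btwn.mp (max_lt ha (EReal.coe_pos.mpr hc))
  have hq0 : (0 : ℝ) < q := EReal.coe_pos.mp ((le_max_right a 0).trans_lt haq)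
  have hnum : 0 < q.num := Rat.num_pos.mpr (by exact_mod_cast hq0)
  have hq : (q : ℝ) = (q.num.toNat : ℝ) / q.den := by
    have hcast : ((q.num.toNat : ℕ) : ℝ) = q.num := by
      exact_mod_cast Int.toNat_of_nonneg hnum.le
    rw [hcast, Rat.cast_def]
  calc a ≤ ((q : ℝ) : EReal) := (le_max_left a 0).trans haq.le
    _ ≤ sSup T := le_sSup (hq ▸ h _ _ (by omega) q.den_pos (hq ▸ EReal.coe_lt_coe_iff.mp hqc))

theorem monomial_mem_of_le {I : Ideal (MvPolynomial (Fin n) 𝕜)} {a b : Fin n →₀ ℕ}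
    (ha : monomial a (1 : 𝕜) ∈ I) (hab : a ≤ b) : monomial b (1 : 𝕜) ∈ I :=
  Ideal.mem_of_dvd _ (monomial_dvd_monomial.mpr ⟨Or.inr hab, one_dvd _⟩) ha

theorem span_monomial_mul_span_monomial (A B : Set (Fin n →₀ ℕ)) :
    Ideal.span ((fun d => monomial d (1 : 𝕜)) '' A) * Ideal.span ((fun d => monomial d 1) '' B) =
      Ideal.span ((fun d => monomial d 1) '' (A + B)) := by
  rw [Ideal.span_mul_span']
  congr 1
  ext x
  simp only [Set.mem_mul, Set.mem_add, Set.mem_image]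
  constructor
  · rintro ⟨_, ⟨a, ha, rfl⟩, _, ⟨b, hb, rfl⟩, rfl⟩
    exact ⟨a + b, ⟨a, ha, b, hb, rfl⟩, by rw [monomial_mul, one_mul]⟩
  · rintro ⟨_, ⟨a, ha, b, hb, rfl⟩, rfl⟩
    exact ⟨_, ⟨a, ha, rfl⟩, _, ⟨b, hb, rfl⟩, by rw [monomial_mul, one_mul]⟩

namespace IsMonomialIdeal

variable {I J : Ideal (MvPolynomial (Fin n) 𝕜)}

theorem mem_iff (hI : IsMonomialIdeal I) {f : MvPolynomial (Fin n) 𝕜} :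
    f ∈ I ↔ ∀ b ∈ f.support, monomial b (1 : 𝕜) ∈ I := by
  obtain ⟨S, rfl⟩ := hI
  simp [mem_ideal_span_monomial_image]

theorem of_forall_monomial_mem (h : ∀ f ∈ I, ∀ b ∈ f.support, monomial b (1 : 𝕜) ∈ I) :
    IsMonomialIdeal I := by
  refine ⟨{b | monomial b 1 ∈ I}, le_antisymm (fun f hf => ?_) ?_⟩
  · rw [f.as_sum]
    refine Ideal.sum_mem _ fun b hb => ?_
    rw [← mul_one (coeff b f), ← C_mul_monomial]
    exact Ideal.mul_mem_left _ _ (Ideal.subset_span ⟨b, h f hf b hb, rfl⟩)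
  · exact Ideal.span_le.mpr (by rintro _ ⟨b, hb, rfl⟩; exact hb)

theorem top : IsMonomialIdeal (⊤ : Ideal (MvPolynomial (Fin n) 𝕜)) :=
  ⟨{0}, by simp⟩

theorem mul (hI : IsMonomialIdeal I) (hJ : IsMonomialIdeal J) : IsMonomialIdeal (I * J) := by
  obtain ⟨A, rfl⟩ := hI
  obtain ⟨B, rfl⟩ := hJ
  exact ⟨A + B, span_monomial_mul_span_monomial A B⟩

theorem pow (hI : IsMonomialIdeal I) (m : ℕ) : IsMonomialIdeal (I ^ m) := by
  induction m with
  | zero => simpa using top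
  | succ m ih => simpa [pow_succ] using ih.mul hI

theorem monomial_mem_mul_iff (hI : IsMonomialIdeal I) (hJ : IsMonomialIdeal J)
    {c : Fin n →₀ ℕ} :
    monomial c (1 : 𝕜) ∈ I * J ↔
      ∃ a b, monomial a (1 : 𝕜) ∈ I ∧ monomial b (1 : 𝕜) ∈ J ∧ a + b ≤ c := by
  refine ⟨fun h => ?_, fun ⟨a, b, ha, hb, hab⟩ => ?_⟩
  · obtain ⟨A, rfl⟩ := hI
    obtain ⟨B, rfl⟩ := hJ
    rw [span_monomial_mul_span_monomial, mem_ideal_span_monomial_image] at h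
    obtain ⟨_, ⟨a, ha, b, hb, rfl⟩, hab⟩ := h c (by simp)
    exact ⟨a, b, Ideal.subset_span ⟨a, ha, rfl⟩, Ideal.subset_span ⟨b, hb, rfl⟩, hab⟩
  · refine monomial_mem_of_le ?_ hab
    rw [← one_mul (1 : 𝕜), ← monomial_mul]
    exact Ideal.mul_mem_mul ha hb

theorem biInf {ι : Type*} {s : Set ι} {J : ι → Ideal (MvPolynomial (Fin n) 𝕜)}
    (hJ : ∀ i ∈ s, IsMonomialIdeal (J i)) : IsMonomialIdeal (⨅ i ∈ s, J i) := by
  refine of_forall_monomial_mem fun f hf b hb => ?_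
  simp only [Submodule.mem_iInf] at hf ⊢
  exact fun i hi => (hJ i hi).mem_iff.mp (hf i hi) b hb

theorem exists_pow_mem_pow_of_mem_integralClosure (hJ : IsMonomialIdeal J) {a : Fin n →₀ ℕ}
    (h : monomial a (1 : 𝕜) ∈ idealIntegralClosure J) :
    ∃ k, 0 < k ∧ monomial (k • a) (1 : 𝕜) ∈ J ^ k := by
  obtain ⟨m, hm, c, hc, heq⟩ := h
  by_contra! hnot
  -- read off the coefficient of `x^(m a)` in the integral equation: it is `1 + 0 + ⋯ + 0`
  have hcoeff : ∀ i ∈ Finset.Icc 1 m,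
      coeff (m • a) (c i * monomial a (1 : 𝕜) ^ (m - i)) = 0 := by
    intro i hi
    obtain ⟨hi1, him⟩ := Finset.mem_Icc.mp hi
    have hsplit : m • a = i • a + (m - i) • a := by
      rw [← add_nsmul, Nat.add_sub_cancel' him]
    rw [monomial_pow, one_pow, hsplit, coeff_mul_monomial, mul_one, ← notMem_support_iff]
    exact fun hmem => hnot i hi1 ((hJ.pow i).mem_iff.mp (hc i hi) _ hmem)
  have := congrArg (coeff (m • a)) heq
  rw [coeff_add, coeff_sum, Finset.sum_eq_zero hcoeff, monomial_pow, one_pow, coeff_monomial,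
    if_pos rfl, coeff_zero, add_zero] at this
  exact one_ne_zero this

end IsMonomialIdeal

theorem mem_idealIntegralClosure_of_pow_mem_pow {R : Type*} [CommRing R] {J : Ideal R} {x : R}
    {k : ℕ} (hk : 0 < k) (h : x ^ k ∈ J ^ k) : x ∈ idealIntegralClosure J := by
  refine ⟨k, hk, fun i => if i = k then -x ^ k else 0, fun i _ => ?_, ?_⟩
  · dsimp only
    split_ifs with hik
    · subst hik
      exact neg_mem h
    · exact zero_mem _
  · rw [Finset.sum_eq_single_of_mem k (Finset.mem_Icc.mpr ⟨hk, le_rfl⟩) fun i _ hik => by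
      simp [hik]]
    simp

def exponentVector (d : Fin n →₀ ℕ) : Fin n → ℝ := fun i => d i

@[simp]
theorem exponentVector_apply (d : Fin n →₀ ℕ) (i : Fin n) : exponentVector d i = d i := rfl

theorem exponentVector_nsmul (k : ℕ) (d : Fin n →₀ ℕ) :
    exponentVector (k • d) = (k : ℝ) • exponentVector d := by
  ext i
  simp

def ceilExponent (y : Fin n → ℝ) : Fin n →₀ ℕ :=
  Finsupp.equivFunOnFinite.symm fun i => ⌈y i⌉₊

@[simp]
theorem ceilExponent_apply (y : Fin n → ℝ) (i : Fin n) : ceilExponent y i = ⌈y i⌉₊ := rfl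

section NewtonPolyhedron

variable {I : Ideal (MvPolynomial (Fin n) 𝕜)}

theorem exponentVector_mem_newtonPolyhedron {d : Fin n →₀ ℕ}
    (h : monomial d (1 : 𝕜) ∈ I) : exponentVector d ∈ newtonPolyhedron I :=
  subset_convexHull ℝ _ ⟨d, h, rfl⟩

theorem add_single_mem_newtonPolyhedron {y : Fin n → ℝ} (hy : y ∈ newtonPolyhedron I)
    (j : Fin n) {c : ℝ} (hc : 0 ≤ c) : y + Pi.single j c ∈ newtonPolyhedron I := by
  refine convexHull_min ?_ ((convex_convexHull ℝ _).translate_preimage_left (Pi.single j c)) hy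
  rintro _ ⟨d, hd, rfl⟩
  obtain ⟨N, hN⟩ := exists_nat_gt c
  have hN0 : (0 : ℝ) < N := hc.trans_lt hN
  -- `c • eⱼ` lies on the segment from `0` to `N • eⱼ`, and `x^d X_j^N ∈ I`
  have hdN : exponentVector d + Pi.single j (N : ℝ) ∈ newtonPolyhedron I := by
    have hmem : monomial (d + Finsupp.single j N) (1 : 𝕜) ∈ I := by
      rw [← one_mul (1 : 𝕜), ← monomial_mul]
      exact Ideal.mul_mem_right _ _ hd
    convert exponentVector_mem_newtonPolyhedron hmem using 1
    ext i
    by_cases hij : i = j <;> simp [hij]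
  have := (convex_convexHull ℝ _).add_smul_mem (exponentVector_mem_newtonPolyhedron hd) hdN
    ⟨div_nonneg hc hN0.le, (div_le_one hN0).mpr hN.le⟩
  rwa [← Pi.single_smul, smul_eq_mul, div_mul_cancel₀ _ hN0.ne'] at this

theorem mem_newtonPolyhedron_of_le {y z : Fin n → ℝ} (hy : y ∈ newtonPolyhedron I)
    (hyz : y ≤ z) : z ∈ newtonPolyhedron I := by
  have key : ∀ s : Finset (Fin n),
      y + ∑ j ∈ s, Pi.single j (z j - y j) ∈ newtonPolyhedron I := by
    intro s
    induction s using Finset.induction_on with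
    | empty => simpa using hy
    | insert j s hj ih =>
      rw [Finset.sum_insert hj, add_left_comm, add_comm]
      exact add_single_mem_newtonPolyhedron ih j (sub_nonneg.mpr (hyz j))
  simpa only [← Pi.sub_apply, Finset.univ_sum_single, add_sub_cancel] using key Finset.univ

theorem IsMonomialIdeal.inv_smul_exponentVector_mem_newtonPolyhedron (hI : IsMonomialIdeal I)
    {m : ℕ} (hm : 0 < m) {c : Fin n →₀ ℕ} (h : monomial c (1 : 𝕜) ∈ I ^ m) :
    (m : ℝ)⁻¹ • exponentVector c ∈ newtonPolyhedron I := by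
  induction m, hm using Nat.le_induction generalizing c with
  | base => simpa using exponentVector_mem_newtonPolyhedron (by simpa using h)
  | succ m hm ih =>
    rw [pow_succ] at h
    obtain ⟨a, b, ha, hb, hab⟩ := ((hI.pow m).monomial_mem_mul_iff hI).mp h
    have hm0 : (0 : ℝ) < m := by exact_mod_cast hm
    have hcomb := convex_convexHull ℝ _ (ih ha) (exponentVector_mem_newtonPolyhedron hb)
      (a := m / (m + 1)) (b := 1 / (m + 1)) (by positivity) (by positivity) (by field_simp)
    refine mem_newtonPolyhedron_of_le hcomb fun i => ?_
    have habi : (a i : ℝ) + b i ≤ c i := by exact_mod_cast hab i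
    have hcalc :
        m / (m + 1) * ((m : ℝ)⁻¹ * a i) + 1 / (m + 1) * b i = (a i + b i) / (m + 1) := by
      field_simp
    simp only [Pi.add_apply, Pi.smul_apply, smul_eq_mul, exponentVector_apply, hcalc]
    push_cast
    rw [← div_eq_inv_mul]
    gcongr

theorem monomial_mem_pow_of_smul_le {w : Fin n → ℝ} (hw : w ∈ newtonPolyhedron I) {m : ℕ}
    {c : Fin n →₀ ℕ} (h : ((m + n + 1 : ℕ) : ℝ) • w ≤ exponentVector c) :
    monomial c (1 : 𝕜) ∈ I ^ m := by
  obtain ⟨ι, _, z, t, hzG, hind, ht, ht1, rfl⟩ := eq_pos_convex_span_of_mem_convexHull hw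
  have hcard : Fintype.card ι ≤ n + 1 := hind.card_le_finrank_succ.trans
    (by simpa using (vectorSpan ℝ (Set.range z)).finrank_le)
  choose d hdI hdz using fun i => hzG ⟨i, rfl⟩
  -- round the Carathéodory weights `(m + n + 1) tᵢ` down
  set k : ι → ℕ := fun i => ⌊((m + n + 1 : ℕ) : ℝ) * t i⌋₊
  have hprod : monomial (∑ i, k i • d i) (1 : 𝕜) ∈ I ^ ∑ i, k i := by
    rw [monomial_sum_one, ← Finset.prod_pow_eq_pow_sum]
    refine Ideal.prod_mem_prod fun i _ => ?_
    rw [← one_pow (k i), ← monomial_pow]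
    exact Ideal.pow_mem_pow (hdI i) _
  have hk : m ≤ ∑ i, k i := by
    have hlt : ((m + n + 1 : ℕ) : ℝ) ≤ ∑ i, ((k i : ℝ) + 1) := calc
      ((m + n + 1 : ℕ) : ℝ) = ∑ i, ((m + n + 1 : ℕ) : ℝ) * t i := by
        rw [← Finset.mul_sum, ht1, mul_one]
      _ ≤ ∑ i, ((k i : ℝ) + 1) := Finset.sum_le_sum fun i _ => (Nat.lt_floor_add_one _).le
    rw [Finset.sum_add_distrib, Finset.sum_const, Finset.card_univ, nsmul_one] at hlt
    have : m + n + 1 ≤ ∑ i, k i + Fintype.card ι := by exact_mod_cast hlt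
    omega
  have hle : ∑ i, k i • d i ≤ c := by
    intro j
    have : (((∑ i, k i • d i) j : ℕ) : ℝ) ≤ c j := calc
      (((∑ i, k i • d i) j : ℕ) : ℝ) = ∑ i, (k i : ℝ) * d i j := by
        simp [Finsupp.finsetSum_apply]
      _ ≤ ∑ i, ((m + n + 1 : ℕ) : ℝ) * t i * d i j := Finset.sum_le_sum fun i _ =>
        mul_le_mul_of_nonneg_right (Nat.floor_le (by have := ht i; positivity)) (Nat.cast_nonneg _)
      _ = (((m + n + 1 : ℕ) : ℝ) • ∑ i, t i • z i) j := by
        simp [hdz, Finset.sum_apply, Finset.mul_sum, mul_assoc]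
      _ ≤ c j := h j
    exact_mod_cast this
  exact Ideal.pow_le_pow_right hk (monomial_mem_of_le hprod hle)

theorem IsMonomialIdeal.inv_smul_exponentVector_mem_newtonPolyhedron_of_mem_integralClosure
    (hI : IsMonomialIdeal I) {N : ℕ} (hN : 0 < N) {a : Fin n →₀ ℕ}
    (h : monomial a (1 : 𝕜) ∈ idealIntegralClosure (I ^ N)) :
    (N : ℝ)⁻¹ • exponentVector a ∈ newtonPolyhedron I := by
  obtain ⟨k, hk, hka⟩ := (hI.pow N).exists_pow_mem_pow_of_mem_integralClosure h
  rw [← pow_mul] at hka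
  have := hI.inv_smul_exponentVector_mem_newtonPolyhedron (Nat.mul_pos hN hk) hka
  have hk0 : (k : ℝ) ≠ 0 := by positivity
  rwa [exponentVector_nsmul, smul_smul, Nat.cast_mul, mul_inv, mul_assoc, inv_mul_cancel₀ hk0,
    mul_one] at this

end NewtonPolyhedron

section SymbolicPower

variable {I : Ideal (MvPolynomial (Fin n) 𝕜)}

theorem pow_mem_symbolicPower {m : ℕ} {f : MvPolynomial (Fin n) 𝕜}
    (hf : f ∈ symbolicPower I m) (k : ℕ) : f ^ k ∈ symbolicPower I (m * k) := by
  simp only [symbolicPower, Submodule.mem_iInf] at hf ⊢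
  exact fun p hp => pow_mul p m k ▸ Ideal.pow_mem_pow (hf p hp) k

theorem nonneg_of_mem_symbolicPolyhedron (hI : I ≠ ⊤) {x : Fin n → ℝ}
    (hx : x ∈ symbolicPolyhedron I) : 0 ≤ x := by
  have : Nontrivial (MvPolynomial (Fin n) 𝕜 ⧸ I) := Ideal.Quotient.nontrivial_iff.mpr hI
  obtain ⟨p, hp⟩ :=
    associatedPrimes.nonempty (MvPolynomial (Fin n) 𝕜) (MvPolynomial (Fin n) 𝕜 ⧸ I)
  exact (Set.mem_iInter₂.mp hx p hp).1

end SymbolicPower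

section VariableIdeals

variable (s : Finset (Fin n))

theorem isMonomialIdeal_span_X_image :
    IsMonomialIdeal (Ideal.span (X '' ↑s : Set (MvPolynomial (Fin n) 𝕜))) :=
  ⟨(fun i => Finsupp.single i 1) '' ↑s, by rw [Set.image_image]; rfl⟩

theorem X_mem_span_X_image_iff {i : Fin n} :
    (X i : MvPolynomial (Fin n) 𝕜) ∈ Ideal.span (X '' ↑s) ↔ i ∈ s := by
  simp [mem_ideal_span_X_image, support_X, Finsupp.single_apply]

theorem isPrime_span_X_image :
    (Ideal.span (X '' ↑s : Set (MvPolynomial (Fin n) 𝕜))).IsPrime := by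
  classical
  set P : Ideal (MvPolynomial (Fin n) 𝕜) := Ideal.span (X '' ↑s)
  set φ : MvPolynomial (Fin n) 𝕜 →ₐ[𝕜] MvPolynomial (Fin n) 𝕜 :=
    aeval fun i => if i ∈ s then 0 else X i
  suffices P = RingHom.ker φ from this ▸ RingHom.ker_isPrime φ
  refine le_antisymm (Ideal.span_le.mpr ?_) fun f hf => ?_
  · rintro _ ⟨i, hi, rfl⟩
    simp [φ, Finset.mem_coe.mp hi]
  · -- modulo `P`, killing the variables of `s` changes nothing
    have hφ : (Ideal.Quotient.mkₐ 𝕜 P).comp φ = Ideal.Quotient.mkₐ 𝕜 P := by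
      refine algHom_ext fun i => ?_
      by_cases hi : i ∈ s
      · have hX : X i ∈ P := Ideal.subset_span ⟨i, Finset.mem_coe.mpr hi, rfl⟩
        simpa [φ, hi] using (Ideal.Quotient.eq_zero_iff_mem.mpr hX).symm
      · simp [φ, hi]
    rw [← Ideal.Quotient.eq_zero_iff_mem, ← Ideal.Quotient.mkₐ_eq_mk 𝕜, ← hφ,
      AlgHom.comp_apply, RingHom.mem_ker.mp hf, map_zero]

theorem monomial_mem_span_X_image_pow_iff {m : ℕ} {a : Fin n →₀ ℕ} :
    monomial a (1 : 𝕜) ∈ Ideal.span (X '' ↑s) ^ m ↔ m ≤ ∑ i ∈ s, a i := by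
  induction m generalizing a with
  | zero => simp
  | succ m ih =>
    rw [pow_succ, ((isMonomialIdeal_span_X_image s).pow m).monomial_mem_mul_iff
      (isMonomialIdeal_span_X_image s)]
    constructor
    · rintro ⟨b, c, hb, hc, hbc⟩
      obtain ⟨i, hi, hci⟩ := mem_ideal_span_X_image.mp hc c (by simp)
      have hc1 : 1 ≤ ∑ j ∈ s, c j :=
        (Nat.one_le_iff_ne_zero.mpr hci).trans (Finset.single_le_sum (by simp) hi)
      have hle : ∑ j ∈ s, (b + c) j ≤ ∑ j ∈ s, a j := Finset.sum_le_sum fun j _ => hbc j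
      simp only [Finsupp.add_apply, Finset.sum_add_distrib] at hle
      have := ih.mp hb
      omega
    · intro ha
      obtain ⟨i, hi, hai⟩ : ∃ i ∈ s, a i ≠ 0 := by
        by_contra! h
        rw [Finset.sum_eq_zero h] at ha
        omega
      obtain ⟨b, rfl⟩ : ∃ b, a = b + Finsupp.single i 1 := ⟨a - Finsupp.single i 1,
        (tsub_add_cancel_of_le (by simpa [Nat.one_le_iff_ne_zero])).symm⟩
      refine ⟨b, Finsupp.single i 1, ih.mpr ?_, Ideal.subset_span ⟨i, hi, rfl⟩, le_rfl⟩
      simpa only [Finsupp.coe_add, Pi.add_apply, Finsupp.single_apply, Finset.sum_add_distrib,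
        Finset.sum_ite_eq, hi, ↓reduceIte, add_le_add_iff_right] using ha

end VariableIdeals

theorem prod_X_eq_monomial (s : Finset (Fin n)) :
    ∏ i ∈ s, (X i : MvPolynomial (Fin n) 𝕜) = monomial (∑ i ∈ s, Finsupp.single i 1) 1 :=
  (monomial_sum_one s _).symm

namespace IsSqfreeMonomialIdeal

variable {I : Ideal (MvPolynomial (Fin n) 𝕜)}

theorem isMonomialIdeal (hI : IsSqfreeMonomialIdeal I) : IsMonomialIdeal I := by
  obtain ⟨S, rfl⟩ := hI
  refine ⟨(fun s => ∑ i ∈ s, Finsupp.single i 1) '' S, ?_⟩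
  rw [Set.image_image]
  simp_rw [prod_X_eq_monomial]

theorem mem_iff_forall_cover {S : Set (Finset (Fin n))}
    (hS : I = Ideal.span ((fun s => ∏ i ∈ s, X i) '' S)) {f : MvPolynomial (Fin n) 𝕜} :
    f ∈ I ↔ ∀ F : Finset (Fin n), (∀ s ∈ S, ∃ i ∈ s, i ∈ F) →
      f ∈ Ideal.span (X '' ↑F) := by
  refine ⟨fun hf F hF => ?_, fun h => ?_⟩
  · refine (hS ▸ Ideal.span_le.mpr ?_) hf
    rintro _ ⟨s, hs, rfl⟩
    obtain ⟨i, his, hiF⟩ := hF s hs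
    exact Ideal.mem_of_dvd _ (Finset.dvd_prod_of_mem _ his) (Ideal.subset_span ⟨i, hiF, rfl⟩)
  · classical
    rw [(isMonomialIdeal ⟨S, hS⟩).mem_iff]
    intro b hb
    -- the variables missing from `x^b` do not cover some generator, which then divides `x^b`
    obtain ⟨s, hs, hsb⟩ : ∃ s ∈ S, ∀ i ∈ s, b i ≠ 0 := by
      by_contra! hcov
      obtain ⟨i, hi, hbi⟩ := mem_ideal_span_X_image.mp
        (h (Finset.univ.filter (b · = 0)) (by simpa using hcov)) b hb
      exact hbi (Finset.mem_filter.mp hi).2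
    have hgen : monomial (∑ i ∈ s, Finsupp.single i 1) (1 : 𝕜) ∈ I :=
      hS ▸ Ideal.subset_span ⟨s, hs, prod_X_eq_monomial s⟩
    refine monomial_mem_of_le hgen fun j => ?_
    by_cases hj : j ∈ s
    · simpa [Finsupp.finsetSum_apply, Finsupp.single_apply, hj, Nat.one_le_iff_ne_zero] using
        hsb j hj
    · simp [Finsupp.finsetSum_apply, Finsupp.single_apply, hj]

theorem exists_eq_span_X_image_of_mem_associatedPrimes (hI : IsSqfreeMonomialIdeal I)
    {p : Ideal (MvPolynomial (Fin n) 𝕜)}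
    (hp : p ∈ associatedPrimes (MvPolynomial (Fin n) 𝕜) (MvPolynomial (Fin n) 𝕜 ⧸ I)) :
    ∃ F : Finset (Fin n), p = Ideal.span (X '' ↑F) := by
  classical
  obtain ⟨S, hS⟩ := hI
  obtain ⟨hprime, x, hx⟩ := isAssociatedPrime_iff.mp hp
  obtain ⟨f, rfl⟩ := Submodule.Quotient.mk_surjective I x
  have hmem : ∀ g, g ∈ p ↔ g * f ∈ I := fun g => by
    rw [hx, Submodule.mem_colon_singleton, Submodule.mem_bot, ← Submodule.Quotient.mk_smul,
      Submodule.Quotient.mk_eq_zero, smul_eq_mul]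
  -- `p = (I : f)` is the intersection of the covering primes not containing `f`
  set T := Finset.univ.filter fun F : Finset (Fin n) =>
    (∀ s ∈ S, ∃ i ∈ s, i ∈ F) ∧
      f ∉ Ideal.span (X '' ↑F : Set (MvPolynomial (Fin n) 𝕜))
  have hpT : p = T.inf fun F => Ideal.span (X '' ↑F) := by
    ext g
    rw [hmem, mem_iff_forall_cover hS, Submodule.mem_finsetInf]
    simp only [T, Finset.mem_filter, Finset.mem_univ, true_and, and_imp]
    refine forall₂_congr fun F _ => ?_
    rw [(isPrime_span_X_image F).mul_mem_iff_mem_or_mem]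
    tauto
  obtain ⟨F, hF, hle⟩ := hprime.inf_le'.mp hpT.ge
  exact ⟨F, le_antisymm (hpT ▸ Finset.inf_le hF) hle⟩

theorem isMonomialIdeal_symbolicPower (hI : IsSqfreeMonomialIdeal I) (m : ℕ) :
    IsMonomialIdeal (symbolicPower I m) :=
  IsMonomialIdeal.biInf fun p hp => by
    obtain ⟨F, rfl⟩ := hI.exists_eq_span_X_image_of_mem_associatedPrimes hp
    exact (isMonomialIdeal_span_X_image F).pow m

open Classical in
theorem monomial_mem_symbolicPower_iff (hI : IsSqfreeMonomialIdeal I) {m : ℕ}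
    {a : Fin n →₀ ℕ} :
    monomial a (1 : 𝕜) ∈ symbolicPower I m ↔
      ∀ p ∈ associatedPrimes (MvPolynomial (Fin n) 𝕜) (MvPolynomial (Fin n) 𝕜 ⧸ I),
        m ≤ ∑ i, if X i ∈ p then a i else 0 := by
  simp only [symbolicPower, Submodule.mem_iInf]
  refine forall₂_congr fun p hp => ?_
  obtain ⟨F, rfl⟩ := hI.exists_eq_span_X_image_of_mem_associatedPrimes hp
  simp only [X_mem_span_X_image_iff, monomial_mem_span_X_image_pow_iff, Finset.sum_ite_mem,
    Finset.univ_inter]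

open Classical in
theorem inv_smul_exponentVector_mem_symbolicPolyhedron (hI : IsSqfreeMonomialIdeal I) {m : ℕ}
    (hm : 0 < m) {a : Fin n →₀ ℕ} (h : monomial a (1 : 𝕜) ∈ symbolicPower I m) :
    (m : ℝ)⁻¹ • exponentVector a ∈ symbolicPolyhedron I := by
  rw [hI.monomial_mem_symbolicPower_iff] at h
  refine Set.mem_iInter₂.mpr fun p hp => ⟨fun i => by
    simp only [Pi.smul_apply, exponentVector_apply, smul_eq_mul]; positivity, ?_⟩
  have hm' : (m : ℝ) ≤ ∑ i, if X i ∈ p then (a i : ℝ) else 0 := by exact_mod_cast h p hp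
  calc (1 : ℝ) = (m : ℝ)⁻¹ * m := by field_simp
    _ ≤ (m : ℝ)⁻¹ * ∑ i, if X i ∈ p then (a i : ℝ) else 0 := by gcongr
    _ = _ := by simp [Finset.mul_sum, mul_ite]

open Classical in
theorem monomial_ceilExponent_mem_symbolicPower (hI : IsSqfreeMonomialIdeal I) {x : Fin n → ℝ}
    (hx : x ∈ symbolicPolyhedron I) (m : ℕ) :
    monomial (ceilExponent ((m : ℝ) • x)) (1 : 𝕜) ∈ symbolicPower I m := by
  rw [hI.monomial_mem_symbolicPower_iff]
  intro p hp
  have hx1 := (Set.mem_iInter₂.mp hx p hp).2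
  have : (m : ℝ) ≤ ∑ i, if X i ∈ p then (⌈m * x i⌉₊ : ℝ) else 0 := calc
    (m : ℝ) ≤ m * ∑ i, if X i ∈ p then x i else 0 :=
      le_mul_of_one_le_right (by positivity) hx1
    _ = ∑ i, if X i ∈ p then m * x i else 0 := by simp [Finset.mul_sum, mul_ite]
    _ ≤ _ := Finset.sum_le_sum fun i _ => by split_ifs; exacts [Nat.le_ceil _, le_rfl]
  simpa using (by exact_mod_cast this : m ≤ ∑ i, if X i ∈ p then ⌈m * x i⌉₊ else 0)

theorem symbolicPower_subset_integralClosure (hI : IsSqfreeMonomialIdeal I) {M N : ℕ} {u : ℝ}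
    (hu : 0 < u) (huN : u * N < M) (hsub : u • symbolicPolyhedron I ⊆ newtonPolyhedron I) :
    (symbolicPower I M : Set (MvPolynomial (Fin n) 𝕜)) ⊆ idealIntegralClosure (I ^ N) := by
  intro f hf
  have hgap : 0 < (M : ℝ) - u * N := sub_pos.mpr huN
  obtain ⟨K, hK⟩ := exists_nat_gt ((n + 1) * u / (M - u * N))
  have hK0 : 0 < K := by exact_mod_cast (by positivity : (0 : ℝ) ≤ _).trans_lt hK
  have hM : 0 < M := by exact_mod_cast (by positivity : (0 : ℝ) ≤ u * N).trans_lt huN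
  have hMK : 0 < M * K := Nat.mul_pos hM hK0
  have hscale : ((N * K + n + 1 : ℕ) : ℝ) * u / (M * K : ℕ) ≤ 1 := by
    rw [div_le_one (by exact_mod_cast hMK)]
    rw [div_lt_iff₀ hgap] at hK
    push_cast
    nlinarith
  -- `f^K ∈ I^(NK)`: each monomial `x^c` of `f^K` lies in `I^(MK)`, so `(u / MK) c ∈ NP(I)`
  refine mem_idealIntegralClosure_of_pow_mem_pow hK0 ?_
  rw [← pow_mul]
  refine (hI.isMonomialIdeal.pow _).mem_iff.mpr fun c hc => ?_
  have hcM := (hI.isMonomialIdeal_symbolicPower _).mem_iff.mp (pow_mem_symbolicPower hf K) c hc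
  have hw := hsub
    (Set.smul_mem_smul_set (hI.inv_smul_exponentVector_mem_symbolicPolyhedron hMK hcM))
  refine monomial_mem_pow_of_smul_le hw fun i => ?_
  calc (((N * K + n + 1 : ℕ) : ℝ) • u • ((M * K : ℕ) : ℝ)⁻¹ • exponentVector c) i
      = ((N * K + n + 1 : ℕ) : ℝ) * u / (M * K : ℕ) * c i := by
        simp only [Pi.smul_apply, smul_eq_mul, exponentVector_apply]
        ring
    _ ≤ c i := mul_le_of_le_one_left (Nat.cast_nonneg _) hscale

theorem eventually_not_symbolicPower_subset_integralClosure (hI : IsSqfreeMonomialIdeal I)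
    (hI1 : I ≠ ⊤) {x : Fin n → ℝ} (hx : x ∈ symbolicPolyhedron I) {l : ℝ}
    (hl : l • x ∉ newtonPolyhedron I) {s r : ℕ} (hr : 0 < r) (hsr : (s : ℝ) < l * r) :
    ∀ᶠ t in atTop, ¬ (symbolicPower I (s * t) : Set (MvPolynomial (Fin n) 𝕜)) ⊆
      idealIntegralClosure (I ^ (r * t)) := by
  have hx0 := nonneg_of_mem_symbolicPolyhedron hI1 hx
  -- the rounding error of `⌈s t x⌉` is eventually absorbed by the gap `(l r - s) t x`
  have hceil : ∀ᶠ t : ℕ in atTop, ∀ i,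
      (⌈((s * t : ℕ) : ℝ) * x i⌉₊ : ℝ) ≤ (r * t : ℕ) * (l * x i) := by
    refine eventually_all.mpr fun i => ?_
    rcases (hx0 i).eq_or_lt with hxi | hxi
    · simp [← hxi]
    · obtain ⟨T, hT⟩ := exists_nat_ge (1 / ((l * r - s) * x i))
      filter_upwards [eventually_ge_atTop T] with t ht
      have hgap : 0 < (l * r - s) * x i := mul_pos (by linarith) hxi
      have h1 : 1 ≤ t * ((l * r - s) * x i) := by
        rw [div_le_iff₀ hgap] at hT
        nlinarith [(Nat.cast_le.mpr ht : (T : ℝ) ≤ t)]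
      have h2 := Nat.ceil_lt_add_one (mul_nonneg (Nat.cast_nonneg (s * t)) (hx0 i))
      push_cast at h2 ⊢
      nlinarith
  filter_upwards [hceil, eventually_gt_atTop 0] with t hceil ht hsub
  have hmem := hsub (hI.monomial_ceilExponent_mem_symbolicPower hx (s * t))
  refine hl (mem_newtonPolyhedron_of_le
    (hI.isMonomialIdeal.inv_smul_exponentVector_mem_newtonPolyhedron_of_mem_integralClosure
      (Nat.mul_pos hr ht) hmem) fun i => ?_)
  have hrt : (0 : ℝ) < (r * t : ℕ) := by exact_mod_cast Nat.mul_pos hr ht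
  simp only [Pi.smul_apply, smul_eq_mul, exponentVector_apply, ceilExponent_apply]
  rw [inv_mul_le_iff₀ hrt]
  exact hceil i

end IsSqfreeMonomialIdeal

theorem asymptoticResurgence_symbolic_eq_supScaleNotSubset_general
    (I : Ideal (MvPolynomial (Fin n) 𝕜))
    (hISqf : IsSqfreeMonomialIdeal I) (hI1 : I ≠ ⊤) :
    asymptoticResurgence (symbolicPower I) (fun t => idealIntegralClosure (I ^ t)) =
      supScaleNotSubset (symbolicPolyhedron I) (newtonPolyhedron I) := by
  unfold asymptoticResurgence supScaleNotSubset
  apply le_antisymm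
  · refine sSup_le ?_
    rintro _ ⟨s, r, hs, hr, hev, rfl⟩
    refine EReal.coe_le_sSup_of_forall_div_lt_mem (by positivity)
      fun s' r' hs' hr' hlt => ⟨s' / r', by positivity, fun hsub => ?_, rfl⟩
    obtain ⟨t, hnot, ht⟩ := (hev.and (eventually_gt_atTop 0)).exists
    refine hnot (hISqf.symbolicPower_subset_integralClosure (by positivity) ?_ hsub)
    have hr0 : (0 : ℝ) < r := by exact_mod_cast hr
    have ht0 : (0 : ℝ) < t := by exact_mod_cast ht
    rw [lt_div_iff₀ hr0] at hlt
    push_cast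
    nlinarith
  · refine sSup_le ?_
    rintro _ ⟨l, hl, hnot, rfl⟩
    obtain ⟨_, ⟨x, hx, rfl⟩, hlx⟩ := Set.not_subset.mp hnot
    refine EReal.coe_le_sSup_of_forall_div_lt_mem hl
      fun s r hs hr hsr => ⟨s, r, hs, hr, ?_, rfl⟩
    exact hISqf.eventually_not_symbolicPower_subset_integralClosure hI1 hx hlx hr
      ((div_lt_iff₀ (by exact_mod_cast hr)).mp hsr)

/-- equation (eq.V). For a nonzero proper squarefree monomial ideal `I` in
`k[x_1,…,x_n]`, `ρ̂(I^{(•)}, overline(I^•)) = sup{λ > 0 : λ·SP(I) ⊄ NP(I)}`. -/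
theorem asymptoticResurgence_symbolic_eq_supScaleNotSubset
    (I : Ideal (MvPolynomial (Fin n) 𝕜))
    (hISqf : IsSqfreeMonomialIdeal I) (hI0 : I ≠ ⊥) (hI1 : I ≠ ⊤) :
    asymptoticResurgence (symbolicPower I) (fun t => idealIntegralClosure (I ^ t)) =
      supScaleNotSubset (symbolicPolyhedron I) (newtonPolyhedron I) :=
  asymptoticResurgence_symbolic_eq_supScaleNotSubset_general I hISqf hI1

end
end

section
/- For a nonzero proper squarefree monomial ideal I in R = k[x_1,...,x_n] over a field k, one has SP(I)^o = NP(I^∨) and NP(I) = SP(I^∨)^o. -/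
open Filter Pointwise MvPolynomial

noncomputable section

variable {𝕜 : Type*} [Field 𝕜] {n : ℕ}

/-!
Write `I` as the ideal generated by the squarefree monomials `x^F`, `F ∈ 𝒜`. Then `I` is the
intersection of the primes `P_σ = (x_i : i ∈ σ)` over the minimal transversals `σ` of `𝒜` (the
blocker `b(𝒜)`), and this is a minimal primary decomposition, so these `P_σ` are exactly the
associated primes. Hence `SP(I) = {a ≥ 0 : Σ_{i ∈ σ} a_i ≥ 1 for σ ∈ b(𝒜)}` and `I^∨` is the
squarefree ideal of `b(𝒜)`. For any family `ℬ` of nonempty sets, separating a point from the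
closed convex set `conv{1_F : F ∈ ℬ} + ℝⁿ_{≥0} = NP(x^F : F ∈ ℬ)` shows that this set is the
polar of `{a ≥ 0 : Σ_{i ∈ F} a_i ≥ 1 for F ∈ ℬ}`. Taking `ℬ = b(𝒜)` gives the first identity,
and `ℬ = 𝒜` the second, because `b(b(𝒜))` and `𝒜` have the same minimal members.
-/

section Transversal

variable {α : Type*} {𝒜 : Set (Finset α)} {σ τ : Finset α}

def IsTransversal (𝒜 : Set (Finset α)) (τ : Finset α) : Prop :=
  ∀ F ∈ 𝒜, ∃ i ∈ F, i ∈ τ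

def blocker (𝒜 : Set (Finset α)) : Set (Finset α) :=
  {τ | Minimal (IsTransversal 𝒜) τ}

lemma exists_mem_blocker_subset (h : IsTransversal 𝒜 τ) : ∃ σ ∈ blocker 𝒜, σ ⊆ τ := by
  obtain ⟨σ, hστ, hσ⟩ := exists_minimal_le_of_wellFoundedLT _ τ h
  exact ⟨σ, hσ, hστ⟩

lemma nonempty_of_mem_blocker (h𝒜 : 𝒜.Nonempty) (hσ : σ ∈ blocker 𝒜) : σ.Nonempty := by
  obtain ⟨F, hF⟩ := h𝒜
  obtain ⟨i, -, hi⟩ := hσ.prop F hF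
  exact ⟨i, hi⟩

lemma blocker_nonempty [Fintype α] (h𝒜 : ∀ F ∈ 𝒜, F.Nonempty) : (blocker 𝒜).Nonempty := by
  obtain ⟨σ, hσ, -⟩ := exists_mem_blocker_subset (𝒜 := 𝒜) (τ := Finset.univ)
    fun F hF => (h𝒜 F hF).imp fun i hi => ⟨hi, Finset.mem_univ i⟩
  exact ⟨σ, hσ⟩

lemma isTransversal_compl_iff [Fintype α] [DecidableEq α] :
    IsTransversal 𝒜 τᶜ ↔ ∀ F ∈ 𝒜, ¬ F ⊆ τ := by
  simp only [IsTransversal, Finset.mem_compl, Finset.not_subset]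

lemma isTransversal_blocker_iff [Fintype α] :
    IsTransversal (blocker 𝒜) τ ↔ ∃ F ∈ 𝒜, F ⊆ τ := by
  classical
  constructor
  · intro hτ
    by_contra! hno
    obtain ⟨σ, hσ, hστ⟩ := exists_mem_blocker_subset (isTransversal_compl_iff.2 hno)
    obtain ⟨i, hiσ, hiτ⟩ := hτ σ hσ
    exact Finset.mem_compl.1 (hστ hiσ) hiτ
  · rintro ⟨F, hF, hFτ⟩ σ hσ
    obtain ⟨i, hiF, hiσ⟩ := hσ.prop F hF
    exact ⟨i, hiσ, hFτ hiF⟩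

end Transversal

lemma associatedPrimes_quotient {R M : Type*} [CommRing R] [AddCommGroup M] [Module R M]
    (N : Submodule R M) : associatedPrimes R (M ⧸ N) = N.associatedPrimes := by
  have colon_mkQ : ∀ x : M, (⊥ : Submodule R (M ⧸ N)).colon {N.mkQ x} = N.colon {x} := by
    intro x
    ext r
    rw [Submodule.mem_colon_singleton, Submodule.mem_colon_singleton, ← map_smul,
      Submodule.mem_bot, Submodule.mkQ_apply, Submodule.Quotient.mk_eq_zero]
  ext p
  simp only [AssociatedPrimes.mem_iff, IsAssociatedPrime, Submodule.AssociatePrimes.mem_iff,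
    Submodule.isAssociatedPrime_def]
  refine and_congr_right fun _ => ⟨?_, ?_⟩
  · rintro ⟨x, rfl⟩
    obtain ⟨x, rfl⟩ := N.mkQ_surjective x
    exact ⟨x, by rw [colon_mkQ]⟩
  · rintro ⟨x, rfl⟩
    exact ⟨N.mkQ x, by rw [colon_mkQ]⟩

section SquarefreeIdeal

variable {ι R : Type*} [CommRing R] {𝒜 : Set (Finset ι)} {σ τ : Finset ι}

def sqfreeExponent (s : Finset ι) : ι →₀ ℕ := ∑ i ∈ s, Finsupp.single i 1

lemma sqfreeExponent_apply [DecidableEq ι] (s : Finset ι) (i : ι) :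
    sqfreeExponent s i = if i ∈ s then 1 else 0 := by
  simp [sqfreeExponent, Finsupp.finsetSum_apply, Finsupp.single_apply]

lemma sqfreeExponent_le_iff {s : Finset ι} {d : ι →₀ ℕ} :
    sqfreeExponent s ≤ d ↔ s ⊆ d.support := by
  classical
  simp only [Finsupp.le_def, sqfreeExponent_apply, Finset.subset_iff, Finsupp.mem_support_iff]
  refine ⟨fun h i hi => ?_, fun h i => ?_⟩
  · simpa [hi, Nat.one_le_iff_ne_zero] using h i
  · split_ifs with hi
    · exact Nat.one_le_iff_ne_zero.2 (h hi)
    · exact Nat.zero_le _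

lemma prod_X_eq_monomial_sqfreeExponent (s : Finset ι) :
    ∏ i ∈ s, (X i : MvPolynomial ι R) = monomial (sqfreeExponent s) 1 :=
  (monomial_sum_one s _).symm

variable (R) in
def sqfreeIdeal (𝒜 : Set (Finset ι)) : Ideal (MvPolynomial ι R) :=
  Ideal.span ((fun s => ∏ i ∈ s, X i) '' 𝒜)

variable (R) in
def varIdeal (s : Finset ι) : Ideal (MvPolynomial ι R) :=
  Ideal.span (X '' ↑s)

lemma sqfreeIdeal_eq_span_monomial :
    sqfreeIdeal R 𝒜 = Ideal.span ((fun d => monomial d 1) '' (sqfreeExponent '' 𝒜)) := by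
  simp only [sqfreeIdeal, Set.image_image, prod_X_eq_monomial_sqfreeExponent]

lemma mem_sqfreeIdeal_iff {f : MvPolynomial ι R} :
    f ∈ sqfreeIdeal R 𝒜 ↔ ∀ m ∈ f.support, ∃ F ∈ 𝒜, F ⊆ m.support := by
  simp [sqfreeIdeal_eq_span_monomial, mem_ideal_span_monomial_image, sqfreeExponent_le_iff]

lemma nonempty_of_sqfreeIdeal_ne_bot (h : sqfreeIdeal R 𝒜 ≠ ⊥) : 𝒜.Nonempty := by
  rw [Set.nonempty_iff_ne_empty]
  rintro rfl
  simp [sqfreeIdeal] at h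

lemma nonempty_of_mem_of_sqfreeIdeal_ne_top (h : sqfreeIdeal R 𝒜 ≠ ⊤) :
    ∀ F ∈ 𝒜, F.Nonempty := by
  intro F hF
  rw [Finset.nonempty_iff_ne_empty]
  rintro rfl
  exact h (Ideal.eq_top_of_isUnit_mem _ (Ideal.subset_span ⟨∅, hF, rfl⟩) (by simp))

lemma X_mem_varIdeal_iff [Nontrivial R] {i : ι} :
    (X i : MvPolynomial ι R) ∈ varIdeal R s ↔ i ∈ s := by
  classical
  simp [varIdeal, mem_ideal_span_X_image, support_X, Finsupp.single_apply]

lemma varIdeal_isPrime [IsDomain R] (s : Finset ι) : (varIdeal R s).IsPrime := by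
  classical
  let φ : MvPolynomial ι R →ₐ[R] MvPolynomial ι R := aeval fun i => if i ∈ s then 0 else X i
  have sub_mem : ∀ f, f - φ f ∈ varIdeal R s := by
    intro f
    induction f using MvPolynomial.induction_on with
    | C a => simp [φ]
    | add p q hp hq => simpa [sub_add_sub_comm] using add_mem hp hq
    | mul_X p i hp =>
      by_cases hi : i ∈ s
      · have hX : (X i : MvPolynomial ι R) ∈ varIdeal R s := Ideal.subset_span ⟨i, hi, rfl⟩
        simpa [φ, hi] using Ideal.mul_mem_left _ p hX
      · simpa [φ, hi, ← sub_mul] using Ideal.mul_mem_right (X i) _ hp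
  have : varIdeal R s = RingHom.ker φ := by
    refine le_antisymm (Ideal.span_le.2 ?_) fun f hf => ?_
    · rintro _ ⟨i, hi, rfl⟩
      simp [φ, Finset.mem_coe.1 hi]
    · simpa [RingHom.mem_ker.1 hf] using sub_mem f
  rw [this]
  exact RingHom.ker_isPrime _

lemma prod_X_compl_mem_varIdeal_iff [Fintype ι] [DecidableEq ι] [IsDomain R] :
    ∏ i ∈ σᶜ, (X i : MvPolynomial ι R) ∈ varIdeal R τ ↔ ¬ τ ⊆ σ := by
  have := varIdeal_isPrime (R := R) τ
  simp [Ideal.IsPrime.prod_mem_iff, X_mem_varIdeal_iff, Finset.not_subset, and_comm]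

lemma sqfreeIdeal_le_varIdeal (h : IsTransversal 𝒜 τ) : sqfreeIdeal R 𝒜 ≤ varIdeal R τ := by
  refine Ideal.span_le.2 ?_
  rintro _ ⟨F, hF, rfl⟩
  obtain ⟨i, hiF, hiτ⟩ := h F hF
  exact Ideal.mem_of_dvd _ (Finset.dvd_prod_of_mem _ hiF) (Ideal.subset_span ⟨i, hiτ, rfl⟩)

lemma sqfreeIdeal_eq_iInf_varIdeal [Fintype ι] :
    sqfreeIdeal R 𝒜 = ⨅ τ ∈ blocker 𝒜, varIdeal R τ := by
  classical
  refine le_antisymm (le_iInf₂ fun τ hτ => sqfreeIdeal_le_varIdeal hτ.prop) fun f hf => ?_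
  rw [mem_sqfreeIdeal_iff]
  intro m hm
  by_contra! hm𝒜
  obtain ⟨σ, hσ, hσm⟩ := exists_mem_blocker_subset (isTransversal_compl_iff.2 hm𝒜)
  have hfσ : f ∈ varIdeal R σ := by
    simp only [Submodule.mem_iInf] at hf
    exact hf σ hσ
  obtain ⟨i, hiσ, hmi⟩ := mem_ideal_span_X_image.1 hfσ m hm
  exact Finset.mem_compl.1 (hσm hiσ) (Finsupp.mem_support_iff.2 hmi)

theorem associatedPrimes_sqfreeIdeal [IsDomain R] [Fintype ι] (𝒜 : Set (Finset ι)) :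
    associatedPrimes (MvPolynomial ι R) (MvPolynomial ι R ⧸ sqfreeIdeal R 𝒜) =
      varIdeal R '' blocker 𝒜 := by
  classical
  have radical_colon_univ : ∀ {J : Ideal (MvPolynomial ι R)}, J.IsPrime →
      (J.colon Set.univ).radical = J := fun hJ => by rw [Submodule.colon_univ, hJ.radical]
  set t := (Set.toFinite (blocker 𝒜)).toFinset.image (varIdeal R)
  have ht_coe : (t : Set (Ideal (MvPolynomial ι R))) = varIdeal R '' blocker 𝒜 := by simp [t]
  have ht_prime : ∀ J ∈ t, J.IsPrime := by
    simp only [t, Finset.mem_image]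
    rintro _ ⟨σ, -, rfl⟩
    exact varIdeal_isPrime σ
  have hdec : Submodule.IsMinimalPrimaryDecomposition (sqfreeIdeal R 𝒜) t :=
    { inf_eq := by
        rw [Finset.inf_image, Finset.inf_eq_iInf, sqfreeIdeal_eq_iInf_varIdeal]
        simp
      primary := fun J hJ => (ht_prime J hJ).isPrimary
      distinct := fun J hJ J' hJ' hne => by
        simpa only [Function.onFun, radical_colon_univ (ht_prime J hJ),
          radical_colon_univ (ht_prime J' hJ')] using hne
      minimal := by
        simp only [t, Finset.mem_image]
        rintro _ ⟨σ, hσ, rfl⟩ hle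
        rw [Set.Finite.mem_toFinset] at hσ
        -- `∏_{i ∉ σ} x_i` lies in every other `P_τ`, since `τ ⊄ σ` by minimality of `σ`.
        refine (prod_X_compl_mem_varIdeal_iff (R := R) (σ := σ)).1 ?_ subset_rfl
        apply hle
        simp only [Submodule.mem_finsetInf, Finset.mem_erase, Finset.mem_image,
          Set.Finite.mem_toFinset, id]
        rintro _ ⟨hne, τ, hτ, rfl⟩
        exact prod_X_compl_mem_varIdeal_iff.2 fun hτσ => hne (by rw [hσ.eq_of_le hτ.prop hτσ]) }
  rw [associatedPrimes_quotient, ← hdec.image_radical_eq_associated_primes, ← ht_coe]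
  exact (Set.image_congr fun J hJ => radical_colon_univ (ht_prime J hJ)).trans (Set.image_id _)

end SquarefreeIdeal

section Polyhedra

variable {ι : Type*} {𝒜 ℬ : Set (Finset ι)}

def realExponent (d : ι →₀ ℕ) : ι → ℝ := fun i => d i

lemma realExponent_add (d e : ι →₀ ℕ) :
    realExponent (d + e) = realExponent d + realExponent e := by
  ext i
  simp [realExponent]

lemma convexHull_range_realExponent [Fintype ι] :
    convexHull ℝ (Set.range (realExponent (ι := ι))) = Set.Ici 0 := by
  classical
  set K := convexHull ℝ (Set.range (realExponent (ι := ι)))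
  refine subset_antisymm (convexHull_min ?_ (convex_Ici 0)) fun w hw => ?_
  · rintro _ ⟨d, rfl⟩ i
    exact Nat.cast_nonneg _
  have add_mem : ∀ x y, x ∈ K → y ∈ K → x + y ∈ K := by
    have : K + K ⊆ K := by
      rw [← convexHull_add]
      refine convexHull_mono ?_
      rintro _ ⟨_, ⟨d, rfl⟩, _, ⟨e, rfl⟩, rfl⟩
      exact ⟨d + e, realExponent_add d e⟩
    exact fun x y hx hy => this (Set.add_mem_add hx hy)
  have zero_mem : (0 : ι → ℝ) ∈ K := subset_convexHull ℝ _ ⟨0, by ext; simp [realExponent]⟩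
  -- `{t | single i t ∈ K}` is convex and contains `ℕ`, hence every interval `[⌊t⌋, ⌊t⌋ + 1]`.
  have single_mem : ∀ i, ∀ t : ℝ, 0 ≤ t → Pi.single i t ∈ K := by
    intro i t ht
    have hconv : Convex ℝ (LinearMap.single ℝ (fun _ => ℝ) i ⁻¹' K) :=
      (convex_convexHull ℝ _).linear_preimage _
    have hnat : ∀ N : ℕ, (N : ℝ) ∈ LinearMap.single ℝ (fun _ => ℝ) i ⁻¹' K := fun N =>
      subset_convexHull ℝ _ ⟨Finsupp.single i N, by
        ext j; simp [realExponent, Pi.single_apply, Finsupp.single_apply, eq_comm]⟩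
    have hseg := hconv.segment_subset (hnat ⌊t⌋₊) (hnat (⌊t⌋₊ + 1))
    rw [segment_eq_Icc (by push_cast; linarith)] at hseg
    exact hseg ⟨Nat.floor_le ht, by push_cast; exact (Nat.lt_floor_add_one t).le⟩
  rw [← Finset.univ_sum_single w]
  exact Finset.sum_induction _ (· ∈ K) add_mem zero_mem fun i _ => single_mem i _ (hw i)

lemma realExponent_sqfreeExponent_dotProduct [Fintype ι] (F : Finset ι) (b : ι → ℝ) :
    realExponent (sqfreeExponent F) ⬝ᵥ b = ∑ i ∈ F, b i := by
  classical
  simp [dotProduct, realExponent, sqfreeExponent_apply, Finset.sum_ite_mem]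

def coveringPolyhedron (𝒜 : Set (Finset ι)) : Set (ι → ℝ) :=
  ⋂ F ∈ 𝒜, {a | (∀ i, 0 ≤ a i) ∧ 1 ≤ ∑ i ∈ F, a i}

lemma mem_coveringPolyhedron (h𝒜 : 𝒜.Nonempty) {a : ι → ℝ} :
    a ∈ coveringPolyhedron 𝒜 ↔ 0 ≤ a ∧ ∀ F ∈ 𝒜, 1 ≤ ∑ i ∈ F, a i := by
  obtain ⟨F₀, hF₀⟩ := h𝒜
  simp only [coveringPolyhedron, Set.mem_iInter₂, Set.mem_ofPred_eq, Pi.le_def, Pi.zero_apply]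
  exact ⟨fun h => ⟨(h F₀ hF₀).1, fun F hF => (h F hF).2⟩, fun h F hF => ⟨h.1, h.2 F hF⟩⟩

lemma one_mem_coveringPolyhedron (h𝒜 : ∀ F ∈ 𝒜, F.Nonempty) :
    (1 : ι → ℝ) ∈ coveringPolyhedron 𝒜 := by
  simp only [coveringPolyhedron, Set.mem_iInter₂, Set.mem_ofPred_eq]
  intro F hF
  refine ⟨fun _ => zero_le_one, ?_⟩
  simpa using (h𝒜 F hF).card_pos

lemma add_mem_coveringPolyhedron {a w : ι → ℝ} (ha : a ∈ coveringPolyhedron 𝒜) (hw : 0 ≤ w) :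
    a + w ∈ coveringPolyhedron 𝒜 := by
  simp only [coveringPolyhedron, Set.mem_iInter₂, Set.mem_ofPred_eq] at ha ⊢
  intro F hF
  obtain ⟨ha0, haF⟩ := ha F hF
  refine ⟨fun i => add_nonneg (ha0 i) (hw i), ?_⟩
  rw [Pi.add_def, Finset.sum_add_distrib]
  linarith [Finset.sum_nonneg fun i (_ : i ∈ F) => hw i]

lemma coveringPolyhedron_subset_of_forall_exists_subset (h : ∀ F ∈ 𝒜, ∃ G ∈ ℬ, G ⊆ F) :
    coveringPolyhedron ℬ ⊆ coveringPolyhedron 𝒜 := by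
  intro a ha
  simp only [coveringPolyhedron, Set.mem_iInter₂, Set.mem_ofPred_eq] at ha ⊢
  intro F hF
  obtain ⟨G, hG, hGF⟩ := h F hF
  obtain ⟨ha0, haG⟩ := ha G hG
  exact ⟨ha0, haG.trans (Finset.sum_le_sum_of_subset_of_nonneg hGF fun i _ _ => ha0 i)⟩

lemma coveringPolyhedron_blocker_blocker [Fintype ι] :
    coveringPolyhedron (blocker (blocker 𝒜)) = coveringPolyhedron 𝒜 := by
  refine subset_antisymm (coveringPolyhedron_subset_of_forall_exists_subset fun F hF => ?_)
    (coveringPolyhedron_subset_of_forall_exists_subset fun τ hτ => ?_)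
  · exact exists_mem_blocker_subset (isTransversal_blocker_iff.2 ⟨F, hF, subset_rfl⟩)
  · exact isTransversal_blocker_iff.1 hτ.prop

lemma exists_forall_apply_eq_dotProduct [Fintype ι] (f : (ι → ℝ) →ₗ[ℝ] ℝ) :
    ∃ y : ι → ℝ, ∀ x, f x = x ⬝ᵥ y := by
  classical
  refine ⟨(dotProductEquiv ℝ ι).symm f, fun x => ?_⟩
  rw [dotProduct_comm, ← dotProductEquiv_apply_apply, LinearEquiv.apply_symm_apply]

lemma nonneg_of_forall_le_dotProduct [Fintype ι] {C : Set (ι → ℝ)} {c y : ι → ℝ} {u : ℝ}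
    (hc : c ∈ C) (hC : ∀ x ∈ C, ∀ w, 0 ≤ w → x + w ∈ C) (hu : ∀ x ∈ C, u ≤ x ⬝ᵥ y) :
    0 ≤ y := by
  classical
  intro i
  by_contra! hyi
  rw [Pi.zero_apply] at hyi
  set μ := (c ⬝ᵥ y - u + 1) / -y i
  have hμ : 0 ≤ μ := div_nonneg (by linarith [hu c hc]) (by linarith)
  have hle := hu _ (hC c hc (Pi.single i μ) (Pi.single_nonneg.2 hμ))
  have hμy : μ * y i = -(c ⬝ᵥ y - u + 1) := by
    have : y i ≠ 0 := hyi.ne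
    simp only [μ]
    field_simp
  rw [add_dotProduct, single_dotProduct, hμy] at hle
  linarith

end Polyhedra

lemma newtonPolyhedron_span_monomial (V : Set (Fin n →₀ ℕ)) :
    newtonPolyhedron (Ideal.span ((fun d => monomial d (1 : 𝕜)) '' V)) =
      convexHull ℝ (realExponent '' V) + Set.Ici 0 := by
  classical
  have hexp : {x | ∃ d : Fin n →₀ ℕ,
      monomial d (1 : 𝕜) ∈ Ideal.span ((fun d => monomial d 1) '' V) ∧ x = fun i => (d i : ℝ)} =
      realExponent '' V + Set.range realExponent := by
    ext x
    simp only [mem_ideal_span_monomial_image, support_monomial, if_neg one_ne_zero,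
      Finset.mem_singleton, forall_eq, le_iff_exists_add, Set.mem_ofPred_eq, Set.mem_add,
      Set.mem_image, Set.mem_range]
    constructor
    · rintro ⟨_, ⟨v, hv, e, rfl⟩, rfl⟩
      exact ⟨_, ⟨v, hv, rfl⟩, _, ⟨e, rfl⟩, (realExponent_add v e).symm⟩
    · rintro ⟨_, ⟨v, hv, rfl⟩, _, ⟨e, rfl⟩, rfl⟩
      exact ⟨v + e, ⟨v, hv, e, rfl⟩, (realExponent_add v e).symm⟩
  rw [newtonPolyhedron, hexp, convexHull_add, convexHull_range_realExponent]

section Polar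

variable {D : Set (Fin n → ℝ)} {a : Fin n → ℝ} {𝒜 : Set (Finset (Fin n))}

lemma mem_polarSet_iff : a ∈ polarSet D ↔ ∀ b ∈ D, 1 ≤ a ⬝ᵥ b := Iff.rfl

lemma convex_polarSet (D : Set (Fin n → ℝ)) : Convex ℝ (polarSet D) := by
  intro x hx y hy s t hs ht hst
  rw [mem_polarSet_iff] at hx hy ⊢
  intro b hb
  rw [add_dotProduct, smul_dotProduct, smul_dotProduct, smul_eq_mul, smul_eq_mul]
  nlinarith [hx b hb, hy b hb]

lemma add_mem_polarSet (hD : ∀ b ∈ D, 0 ≤ b) (ha : a ∈ polarSet D) {w : Fin n → ℝ}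
    (hw : 0 ≤ w) : a + w ∈ polarSet D := by
  intro b hb
  show 1 ≤ (a + w) ⬝ᵥ b
  rw [add_dotProduct]
  linarith [mem_polarSet_iff.1 ha b hb, dotProduct_nonneg_of_nonneg hw (hD b hb)]

lemma convexHull_add_Ici_subset_polarSet (h𝒜 : 𝒜.Nonempty) :
    convexHull ℝ (realExponent '' (sqfreeExponent '' 𝒜)) + Set.Ici 0 ⊆
      polarSet (coveringPolyhedron 𝒜) := by
  rintro _ ⟨c, hc, w, hw, rfl⟩
  refine add_mem_polarSet (fun b hb => ((mem_coveringPolyhedron h𝒜).1 hb).1)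
    (convexHull_min ?_ (convex_polarSet _) hc) hw
  rintro _ ⟨_, ⟨F, hF, rfl⟩, rfl⟩ b hb
  show 1 ≤ realExponent (sqfreeExponent F) ⬝ᵥ b
  rw [realExponent_sqfreeExponent_dotProduct]
  exact ((mem_coveringPolyhedron h𝒜).1 hb).2 F hF

lemma polarSet_coveringPolyhedron_subset (h𝒜 : 𝒜.Nonempty) (hF : ∀ F ∈ 𝒜, F.Nonempty) :
    polarSet (coveringPolyhedron 𝒜) ⊆
      convexHull ℝ (realExponent '' (sqfreeExponent '' 𝒜)) + Set.Ici 0 := by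
  set C := convexHull ℝ (realExponent '' (sqfreeExponent '' 𝒜)) + Set.Ici 0
  have hC_add : ∀ x ∈ C, ∀ w, 0 ≤ w → x + w ∈ C := by
    rintro _ ⟨c, hc, v, hv, rfl⟩ w hw
    exact ⟨c, hc, v + w, add_nonneg hv hw, (add_assoc c v w).symm⟩
  have hC_closed : IsClosed C := isClosed_Ici.add_left_of_isCompact
    ((((Set.toFinite 𝒜).image _).image _).isCompact_convexHull (𝕜 := ℝ))
  have hgen : ∀ F ∈ 𝒜, realExponent (sqfreeExponent F) ∈ C := fun F hF =>
    ⟨_, subset_convexHull ℝ _ ⟨_, ⟨F, hF, rfl⟩, rfl⟩, 0, Set.mem_Ici.2 le_rfl, add_zero _⟩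
  intro a ha
  by_contra haC
  have ha0 : 0 ≤ a := nonneg_of_forall_le_dotProduct (one_mem_coveringPolyhedron hF)
    (fun x hx w hw => add_mem_coveringPolyhedron hx hw) fun b hb => by
      rw [dotProduct_comm]; exact ha b hb
  -- The functional separating `a` from `C`, rescaled, is a point of the covering polyhedron
  -- at which `a` takes a value below `1`.
  obtain ⟨f, u, hfa, hfC⟩ :=
    geometric_hahn_banach_point_closed ((convex_convexHull ℝ _).add (convex_Ici 0)) hC_closed haC
  obtain ⟨y, hf⟩ := exists_forall_apply_eq_dotProduct (f : (Fin n → ℝ) →ₗ[ℝ] ℝ)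
  obtain ⟨F₀, hF₀⟩ := h𝒜
  have hy : 0 ≤ y := nonneg_of_forall_le_dotProduct (hgen F₀ hF₀) hC_add fun x hx =>
    (hf x ▸ hfC x hx).le
  have hu : 0 < u := (dotProduct_nonneg_of_nonneg ha0 hy).trans_lt (hf a ▸ hfa)
  have hyH : u⁻¹ • y ∈ coveringPolyhedron 𝒜 := by
    refine (mem_coveringPolyhedron ⟨F₀, hF₀⟩).2
      ⟨smul_nonneg (inv_nonneg.2 hu.le) hy, fun F hF => ?_⟩
    have := hf _ ▸ hfC _ (hgen F hF)
    rw [realExponent_sqfreeExponent_dotProduct] at this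
    simp only [Pi.smul_apply, smul_eq_mul, ← Finset.mul_sum]
    rw [le_inv_mul_iff₀ hu]
    linarith
  have := mem_polarSet_iff.1 ha _ hyH
  rw [dotProduct_smul, smul_eq_mul, le_inv_mul_iff₀ hu] at this
  linarith [hf a ▸ hfa]

theorem polarSet_coveringPolyhedron_eq_newtonPolyhedron (h𝒜 : 𝒜.Nonempty)
    (hF : ∀ F ∈ 𝒜, F.Nonempty) :
    polarSet (coveringPolyhedron 𝒜) = newtonPolyhedron (sqfreeIdeal 𝕜 𝒜) := by
  rw [sqfreeIdeal_eq_span_monomial, newtonPolyhedron_span_monomial]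
  exact (polarSet_coveringPolyhedron_subset h𝒜 hF).antisymm
    (convexHull_add_Ici_subset_polarSet h𝒜)

end Polar

lemma symbolicPolyhedron_sqfreeIdeal (𝒜 : Set (Finset (Fin n))) :
    symbolicPolyhedron (sqfreeIdeal 𝕜 𝒜) = coveringPolyhedron (blocker 𝒜) := by
  classical
  rw [symbolicPolyhedron, associatedPrimes_sqfreeIdeal, Set.biInter_image]
  simp [coveringPolyhedron, X_mem_varIdeal_iff, Finset.sum_ite_mem]

lemma alexanderDual_sqfreeIdeal (𝒜 : Set (Finset (Fin n))) :
    alexanderDual (sqfreeIdeal 𝕜 𝒜) = sqfreeIdeal 𝕜 (blocker 𝒜) := by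
  rw [alexanderDual, associatedPrimes_sqfreeIdeal, sqfreeIdeal]
  congr 1
  ext f
  simp [X_mem_varIdeal_iff, eq_comm]

/-- Remark `rmk.dual`. For a nonzero proper squarefree monomial ideal `I`,
`SP(I)° = NP(I^∨)` and `NP(I) = SP(I^∨)°`. -/
theorem polar_symbolicPolyhedron_eq_newtonPolyhedron_dual
    (I : Ideal (MvPolynomial (Fin n) 𝕜))
    (hISqf : IsSqfreeMonomialIdeal I) (hI0 : I ≠ ⊥) (hI1 : I ≠ ⊤) :
    polarSet (symbolicPolyhedron I) = newtonPolyhedron (alexanderDual I) ∧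
      newtonPolyhedron I = polarSet (symbolicPolyhedron (alexanderDual I)) := by
  obtain ⟨𝒜, rfl⟩ : ∃ 𝒜, I = sqfreeIdeal 𝕜 𝒜 := hISqf
  have h𝒜 := nonempty_of_sqfreeIdeal_ne_bot hI0
  have hF := nonempty_of_mem_of_sqfreeIdeal_ne_top hI1
  rw [alexanderDual_sqfreeIdeal, symbolicPolyhedron_sqfreeIdeal, symbolicPolyhedron_sqfreeIdeal,
    coveringPolyhedron_blocker_blocker]
  exact ⟨polarSet_coveringPolyhedron_eq_newtonPolyhedron (blocker_nonempty hF)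
      fun σ hσ => nonempty_of_mem_blocker h𝒜 hσ,
    (polarSet_coveringPolyhedron_eq_newtonPolyhedron h𝒜 hF).symm⟩
end
end

section
/- Let a_• be a graded family of nonzero ideals in a domain R and let v be a valuation of the fraction field of R that is supported on R. Then v̂(a_•) = inf_{n≥1} v̂(a_{n,•}) = lim_{n→∞} v̂(a_{n,•}). -/
open Filter

noncomputable section

/-- The `n`-th truncation of a graded family: `a_{n,k} = a_k` for `k ≤ n`, and
`a_{n,k} = Σ_{i,j>0, i+j=k} a_{n,i}·a_{n,j}` for `k > n`. -/
def truncation {R : Type*} [CommSemiring R] (a : ℕ → Ideal R) (n : ℕ) (k : ℕ) : Ideal R :=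
  Nat.strongRecOn k fun k ih =>
    if k ≤ n then a k
    else ⨆ i : Fin k, ⨆ h : 0 < i.val,
      ih i.val i.isLt *
      ih (k - i.val) (Nat.sub_lt (Nat.lt_of_le_of_lt (Nat.zero_le _) i.isLt) h)

/-- An additive real-valued valuation on a field `K`, specified on nonzero elements:
`v(xy) = v(x) + v(y)` and `v(x+y) ≥ min(v(x), v(y))`. -/
structure AddValOn (K : Type*) [Field K] where
  toFun : K → ℝ
  map_mul' : ∀ x y : K, x ≠ 0 → y ≠ 0 → toFun (x * y) = toFun x + toFun y
  map_add' : ∀ x y : K, x ≠ 0 → y ≠ 0 → x + y ≠ 0 → min (toFun x) (toFun y) ≤ toFun (x + y)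

/-- `v(a) = inf{v(f) : 0 ≠ f ∈ a}` for an ideal `a` of a domain `R`. -/
def valIdeal {R : Type*} [CommRing R] [IsDomain R] (v : AddValOn (FractionRing R))
    (a : Ideal R) : ℝ :=
  sInf {t : ℝ | ∃ f ∈ a, f ≠ 0 ∧ t = v.toFun (algebraMap R (FractionRing R) f)}

/-- The skew Waldschmidt constant `v̂(a_•) = inf_{m ≥ 1} v(a_m)/m`
(which is also `lim_{m→∞} v(a_m)/m`). -/
def skewWaldschmidt {R : Type*} [CommRing R] [IsDomain R] (v : AddValOn (FractionRing R))
    (a : ℕ → Ideal R) : ℝ :=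
  sInf {t : ℝ | ∃ m : ℕ, 1 ≤ m ∧ t = valIdeal v (a m) / (m : ℝ)}

/- ## Auxiliary lemmas -/

theorem truncation_def {R : Type*} [CommSemiring R] (a : ℕ → Ideal R) (n k : ℕ) :
    truncation a n k = if k ≤ n then a k
      else ⨆ i : Fin k, ⨆ _ : 0 < i.val,
        truncation a n i.val * truncation a n (k - i.val) := by
  rw [truncation, Nat.strongRecOn_eq]
  rfl

theorem truncation_of_le {R : Type*} [CommSemiring R] (a : ℕ → Ideal R) {n k : ℕ}
    (h : k ≤ n) : truncation a n k = a k := by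
  rw [truncation_def, if_pos h]

theorem truncation_of_gt {R : Type*} [CommSemiring R] (a : ℕ → Ideal R) {n k : ℕ}
    (h : n < k) : truncation a n k =
      ⨆ i : Fin k, ⨆ _ : 0 < i.val,
        truncation a n i.val * truncation a n (k - i.val) := by
  rw [truncation_def, if_neg (by omega)]

theorem truncation_le {R : Type*} [CommSemiring R] (a : ℕ → Ideal R)
    (ha : IsGradedFamily a) (n : ℕ) : ∀ k, truncation a n k ≤ a k := by
  intro k
  induction k using Nat.strong_induction_on with
  | _ k ih =>
    by_cases h : k ≤ n
    · rw [truncation_of_le a h]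
    · rw [truncation_of_gt a (by omega)]
      apply iSup_le; intro i; apply iSup_le; intro hi
      have hik := i.isLt
      calc truncation a n i.val * truncation a n (k - i.val) ≤ a i.val * a (k - i.val) :=
            Ideal.mul_mono (ih i.val hik) (ih (k - i.val) (by omega))
        _ ≤ a (i.val + (k - i.val)) := ha i.val (k - i.val) hi (by omega)
        _ = a k := by congr 1; omega

theorem truncation_ne_bot {R : Type*} [CommRing R] [IsDomain R] (a : ℕ → Ideal R)
    (ha0 : ∀ i : ℕ, 1 ≤ i → a i ≠ ⊥) {n : ℕ} (hn : 1 ≤ n) :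
    ∀ k, 1 ≤ k → truncation a n k ≠ ⊥ := by
  intro k
  induction k using Nat.strong_induction_on with
  | _ k ih =>
    intro hk
    by_cases h : k ≤ n
    · rw [truncation_of_le a h]; exact ha0 k hk
    · rw [truncation_of_gt a (by omega)]
      intro hbot
      have hprod : truncation a n 1 * truncation a n (k - 1) = ⊥ := by
        refine le_bot_iff.mp ?_
        rw [← hbot]
        exact le_iSup_of_le ⟨1, by omega⟩ (le_iSup_of_le (by norm_num) le_rfl)
      rcases Ideal.mul_eq_bot.mp hprod with h1 | h1
      · rw [truncation_of_le a hn] at h1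
        exact ha0 1 le_rfl h1
      · exact ih (k - 1) (by omega) (by omega) h1

section Val

variable {R : Type*} [CommRing R] [IsDomain R] (v : AddValOn (FractionRing R))
variable (hsupp : ∀ x : R, x ≠ 0 → 0 ≤ v.toFun (algebraMap R (FractionRing R) x))
include hsupp

theorem valSet_bddBelow (b : Ideal R) :
    BddBelow {t : ℝ | ∃ f ∈ b, f ≠ 0 ∧ t = v.toFun (algebraMap R (FractionRing R) f)} := by
  refine ⟨0, ?_⟩
  rintro t ⟨f, hf, hf0, rfl⟩
  exact hsupp f hf0

omit hsupp in theorem valSet_nonempty {b : Ideal R} (hb : b ≠ ⊥) :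
    {t : ℝ | ∃ f ∈ b, f ≠ 0 ∧ t = v.toFun (algebraMap R (FractionRing R) f)}.Nonempty := by
  obtain ⟨f, hf, hf0⟩ := Submodule.exists_mem_ne_zero_of_ne_bot hb
  exact ⟨_, f, hf, hf0, rfl⟩

theorem valIdeal_nonneg (b : Ideal R) : 0 ≤ valIdeal v b := by
  apply Real.sInf_nonneg
  rintro t ⟨f, hf, hf0, rfl⟩
  exact hsupp f hf0

theorem valIdeal_mono {b c : Ideal R} (h : b ≤ c) (hb : b ≠ ⊥) :
    valIdeal v c ≤ valIdeal v b := by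
  apply csInf_le_csInf (valSet_bddBelow v hsupp c) (valSet_nonempty v hb)
  rintro t ⟨f, hf, hf0, rfl⟩
  exact ⟨f, h hf, hf0, rfl⟩

theorem valIdeal_le_add {b c d : Ideal R} (h : b * c ≤ d) (hb : b ≠ ⊥) (hc : c ≠ ⊥) :
    valIdeal v d ≤ valIdeal v b + valIdeal v c := by
  have halg : ∀ x : R, x ≠ 0 → (algebraMap R (FractionRing R)) x ≠ 0 := fun x hx => by
    simpa using (map_ne_zero_iff _ (IsFractionRing.injective R (FractionRing R))).mpr hx
  have key : ∀ x ∈ {t : ℝ | ∃ f ∈ b, f ≠ 0 ∧ t = v.toFun (algebraMap R (FractionRing R) f)},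
      ∀ y ∈ {t : ℝ | ∃ f ∈ c, f ≠ 0 ∧ t = v.toFun (algebraMap R (FractionRing R) f)},
      valIdeal v d ≤ x + y := by
    rintro x ⟨f, hf, hf0, rfl⟩ y ⟨g, hg, hg0, rfl⟩
    have hfg : f * g ∈ d := h (Ideal.mul_mem_mul hf hg)
    have hfg0 : f * g ≠ 0 := mul_ne_zero hf0 hg0
    have h1 : valIdeal v d ≤ v.toFun (algebraMap R (FractionRing R) (f * g)) :=
      csInf_le (valSet_bddBelow v hsupp d) ⟨f * g, hfg, hfg0, rfl⟩
    rwa [map_mul, v.map_mul' _ _ (halg f hf0) (halg g hg0)] at h1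
  have h2 : valIdeal v d - valIdeal v b ≤ valIdeal v c := by
    apply le_csInf (valSet_nonempty v hc)
    intro y hy
    have h3 : valIdeal v d - y ≤ valIdeal v b := by
      apply le_csInf (valSet_nonempty v hb)
      intro x hx
      linarith [key x hx y hy]
    linarith
  linarith

omit hsupp in theorem wSet_nonempty (a : ℕ → Ideal R) :
    {t : ℝ | ∃ m : ℕ, 1 ≤ m ∧ t = valIdeal v (a m) / (m : ℝ)}.Nonempty :=
  ⟨_, 1, le_rfl, rfl⟩

theorem wSet_bddBelow (a : ℕ → Ideal R) :
    BddBelow {t : ℝ | ∃ m : ℕ, 1 ≤ m ∧ t = valIdeal v (a m) / (m : ℝ)} := by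
  refine ⟨0, ?_⟩
  rintro t ⟨m, hm, rfl⟩
  exact div_nonneg (valIdeal_nonneg v hsupp _) (Nat.cast_nonneg m)

theorem skewWaldschmidt_nonneg (a : ℕ → Ideal R) : 0 ≤ skewWaldschmidt v a := by
  apply Real.sInf_nonneg
  rintro t ⟨m, hm, rfl⟩
  exact div_nonneg (valIdeal_nonneg v hsupp _) (Nat.cast_nonneg m)

theorem skewWaldschmidt_le (a : ℕ → Ideal R) {m : ℕ} (hm : 1 ≤ m) :
    skewWaldschmidt v a ≤ valIdeal v (a m) / (m : ℝ) :=
  csInf_le (wSet_bddBelow v hsupp a) ⟨m, hm, rfl⟩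

end Val

/-- Theorem `thm.vhatTruncation`(1). Let `a_•` be a graded family of
nonzero ideals in a domain `R` and `v` a valuation of `Frac(R)` supported on `R`. Then
`v̂(a_•) = inf_{n ≥ 1} v̂(a_{n,•}) = lim_{n→∞} v̂(a_{n,•})`. -/
theorem skewWaldschmidt_truncation
    {R : Type*} [CommRing R] [IsDomain R]
    (a : ℕ → Ideal R) (ha : IsGradedFamily a) (ha0 : ∀ i : ℕ, 1 ≤ i → a i ≠ ⊥)
    (v : AddValOn (FractionRing R))
    (hsupp : ∀ x : R, x ≠ 0 → 0 ≤ v.toFun (algebraMap R (FractionRing R) x)) :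
    skewWaldschmidt v a =
        sInf {t : ℝ | ∃ n : ℕ, 1 ≤ n ∧ t = skewWaldschmidt v (truncation a n)} ∧
      Tendsto (fun n : ℕ => skewWaldschmidt v (truncation a n)) atTop
        (nhds (skewWaldschmidt v a)) := by
  -- Step A : `v̂(a) ≤ v̂(a_{n,•})` for `n ≥ 1`.
  have stepA : ∀ n : ℕ, 1 ≤ n → skewWaldschmidt v a ≤ skewWaldschmidt v (truncation a n) := by
    intro n hn
    apply le_csInf (wSet_nonempty v (truncation a n))
    rintro t ⟨m, hm, rfl⟩
    have hm' : (0 : ℝ) < m := by exact_mod_cast hm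
    have h1 : valIdeal v (a m) ≤ valIdeal v (truncation a n m) :=
      valIdeal_mono v hsupp (truncation_le a ha n m) (truncation_ne_bot a ha0 hn m hm)
    calc skewWaldschmidt v a ≤ valIdeal v (a m) / (m : ℝ) := skewWaldschmidt_le v hsupp a hm
      _ ≤ valIdeal v (truncation a n m) / (m : ℝ) := (div_le_div_iff_of_pos_right hm').mpr h1
  -- Step B : `v̂(a_{n,•}) ≤ v(a_n)/n` for `n ≥ 1`.
  have stepB : ∀ n : ℕ, 1 ≤ n →
      skewWaldschmidt v (truncation a n) ≤ valIdeal v (a n) / (n : ℝ) := by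
    intro n hn
    have := skewWaldschmidt_le v hsupp (truncation a n) hn
    rwa [truncation_of_le a le_rfl] at this
  have hSne : {t : ℝ | ∃ n : ℕ, 1 ≤ n ∧ t = skewWaldschmidt v (truncation a n)}.Nonempty :=
    ⟨_, 1, le_rfl, rfl⟩
  have hSbdd : BddBelow {t : ℝ | ∃ n : ℕ, 1 ≤ n ∧ t = skewWaldschmidt v (truncation a n)} := by
    refine ⟨0, ?_⟩
    rintro t ⟨n, hn, rfl⟩
    exact skewWaldschmidt_nonneg v hsupp _
  -- First equality
  have heq : skewWaldschmidt v a =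
      sInf {t : ℝ | ∃ n : ℕ, 1 ≤ n ∧ t = skewWaldschmidt v (truncation a n)} := by
    apply le_antisymm
    · apply le_csInf hSne
      rintro t ⟨n, hn, rfl⟩
      exact stepA n hn
    · apply le_csInf (wSet_nonempty v a)
      rintro t ⟨n, hn, rfl⟩
      calc sInf {t : ℝ | ∃ n : ℕ, 1 ≤ n ∧ t = skewWaldschmidt v (truncation a n)}
          ≤ skewWaldschmidt v (truncation a n) := csInf_le hSbdd ⟨n, hn, rfl⟩
        _ ≤ valIdeal v (a n) / (n : ℝ) := stepB n hn
  refine ⟨heq, ?_⟩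
  -- Fekete's lemma for `u m = v(a_m)`.
  set u : ℕ → ℝ := fun m => valIdeal v (a m) with hu
  have hsub : Subadditive u := by
    intro m n
    rcases Nat.eq_zero_or_pos m with hm | hm
    · subst hm
      simp only [hu, Nat.zero_add]
      have := valIdeal_nonneg v hsupp (a 0)
      linarith
    rcases Nat.eq_zero_or_pos n with hn | hn
    · subst hn
      simp only [hu, Nat.add_zero]
      have := valIdeal_nonneg v hsupp (a 0)
      linarith
    exact valIdeal_le_add v hsupp (ha m n hm hn) (ha0 m hm) (ha0 n hn)
  have hbdd : BddBelow (Set.range fun n : ℕ => u n / n) := by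
    refine ⟨0, ?_⟩
    rintro t ⟨n, rfl⟩
    exact div_nonneg (valIdeal_nonneg v hsupp _) (Nat.cast_nonneg n)
  have hlim : hsub.lim = skewWaldschmidt v a := by
    rw [Subadditive.lim, skewWaldschmidt]
    congr 1
    ext t
    constructor
    · rintro ⟨n, hn, rfl⟩
      exact ⟨n, hn, rfl⟩
    · rintro ⟨n, hn, rfl⟩
      exact ⟨n, hn, rfl⟩
  have htend : Tendsto (fun n : ℕ => u n / n) atTop (nhds (skewWaldschmidt v a)) := by
    rw [← hlim]
    exact hsub.tendsto_lim hbdd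
  refine tendsto_of_tendsto_of_tendsto_of_le_of_le' tendsto_const_nhds htend ?_ ?_
  · filter_upwards [eventually_ge_atTop 1] with n hn using stepA n hn
  · filter_upwards [eventually_ge_atTop 1] with n hn using stepB n hn

end
end
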